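/- Union holds for well-founded extensional apgs: for any well-founded extensional apg X (on a type in a fixed universe) there exists a well-founded extensional apg U (on a type in the same universe) such that for every well-founded extensional apg W, W ⋿ U if and only if there exists a member y of X with W ⋿ X/y. -/

import Mathlib

universe u v

/-- A relation is (inductively) well-founded if every inductive subset is the whole type:
`S` is inductive when `x ∈ S` whenever every child of `x` is in `S`. -/
def IsWFRel {X : Type u} (r : X → X → Prop) : Prop :=
  ∀ S : Set X, (∀ x, (∀ y, r y x → y ∈ S) → x ∈ S) → S = Set.univ

/-- A relation is extensional if nodes with the same children are equal. -/
def IsExtRel {X : Type u} (r : X → X → Prop) : Prop :=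
  ∀ x y, (∀ z, r z x ↔ r z y) → x = y

/-- `Below r x` is the full subgraph `X/x` of nodes admitting a (possibly empty) path to `x`. -/
def Below {X : Type u} (r : X → X → Prop) (x : X) : Type u :=
  {z : X // Relation.ReflTransGen r z x}

/-- The induced relation on the subgraph `X/x`. -/
def belowRel {X : Type u} (r : X → X → Prop) (x : X) :
    Below r x → Below r x → Prop :=
  fun a b => r a.1 b.1

/-- The root of the pointed subgraph `X/x`. -/
def belowRoot {X : Type u} (r : X → X → Prop) (x : X) : Below r x :=
  ⟨x, Relation.ReflTransGen.refl⟩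

/-- Isomorphism of pointed graphs: a relation-preserving-and-reflecting bijection
taking the first distinguished point to the second. -/
def PIso {X : Type u} {Y : Type v} (rX : X → X → Prop) (rY : Y → Y → Prop)
    (x : X) (y : Y) : Prop :=
  ∃ f : X ≃ Y, (∀ a b, rX a b ↔ rY (f a) (f b)) ∧ f x = y

/-- A simulation of graphs. -/
def IsSimulation {X : Type u} {Y : Type v} (rX : X → X → Prop)
    (rY : Y → Y → Prop) (f : X → Y) : Prop :=
  (∀ a b, rX a b → rY (f a) (f b)) ∧
  (∀ x y, rY y (f x) → ∃ a, rX a x ∧ f a = y)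

/-- A bisimulation between graphs. -/
def IsBisimulation {X : Type u} {Y : Type v} (rX : X → X → Prop)
    (rY : Y → Y → Prop) (R : X → Y → Prop) : Prop :=
  ∀ x y, R x y →
    (∀ x', rX x' x → ∃ y', rY y' y ∧ R x' y') ∧
    (∀ y', rY y' y → ∃ x', rX x' x ∧ R x' y')

/-- A bi-entire relation. -/
def BiEntire {X : Type u} {Y : Type v} (R : X → Y → Prop) : Prop :=
  (∀ x, ∃ y, R x y) ∧ (∀ y, ∃ x, R x y)

/-- A well-founded extensional accessible pointed graph ("apg") on a type in universe `u`. -/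
structure WEApg : Type (u + 1) where
  carrier : Type u
  rel : carrier → carrier → Prop
  root : carrier
  acc : ∀ x, Relation.ReflTransGen rel x root
  wf : IsWFRel rel
  ext : IsExtRel rel

/-- Isomorphism of (the underlying pointed graphs of) apgs. -/
def WEApg.Iso (X Y : WEApg.{u}) : Prop :=
  PIso X.rel Y.rel X.root Y.root

/-- Membership of the pointed graph `(W, rW, w)` in the pointed graph `(Y, rY, y)`:
`(W, rW, w)` is isomorphic as a pointed graph to `(Y, rY)/z` for some child `z` of `y`. -/
def MemPGAt {W : Type u} {Y : Type v} (rW : W → W → Prop) (w : W)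
    (rY : Y → Y → Prop) (y : Y) : Prop :=
  ∃ z, rY z y ∧ PIso rW (belowRel rY z) w (belowRoot rY z)

/-- `X ⋿ Y` for apgs: `X` is isomorphic as a pointed graph to `Y/y` for some member
(child of the root) `y` of `Y`. -/
def WEApg.Mem (X Y : WEApg.{u}) : Prop :=
  MemPGAt X.rel X.root Y.rel Y.root

/-!
The members of the members of `X` are the subgraphs `X/z` with `z` a grandchild of the root.
To collect an arbitrary set `S` of nodes of a well-founded extensional graph into one apg,
adjoin a new root whose children are the nodes of `S` and keep only what lies below it.
This is extensional unless some old node `a` already has exactly `S` as its children;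
in that case `X/a` itself does the job.
-/

section PIso

variable {A B C : Type*} {rA : A → A → Prop} {rB : B → B → Prop} {rC : C → C → Prop}

theorem PIso.symm {a : A} {b : B} (h : PIso rA rB a b) : PIso rB rA b a := by
  obtain ⟨f, hf, rfl⟩ := h
  exact ⟨f.symm, fun u v => by simpa using (hf (f.symm u) (f.symm v)).symm, f.symm_apply_apply a⟩

theorem PIso.trans {a : A} {b : B} {c : C} (h₁ : PIso rA rB a b) (h₂ : PIso rB rC b c) :
    PIso rA rC a c := by
  obtain ⟨f, hf, rfl⟩ := h₁
  obtain ⟨g, hg, rfl⟩ := h₂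
  exact ⟨f.trans g, fun u v => (hf u v).trans (hg _ _), rfl⟩

end PIso

section Below

variable {A B : Type*} {r : A → A → Prop} {rB : B → B → Prop}

theorem isWFRel_iff_wellFounded : IsWFRel r ↔ WellFounded r := by
  refine ⟨fun h => ⟨fun a => ?_⟩, fun h S hS => Set.eq_univ_of_forall fun x => ?_⟩
  · exact Set.eq_univ_iff_forall.mp (h {x | Acc r x} fun x hx => Acc.intro x hx) a
  · induction x using h.induction with
    | _ x ih => exact hS x ih

theorem reflTransGen_belowRel_belowRoot {x : A} (z : Below r x) :
    Relation.ReflTransGen (belowRel r x) z (belowRoot r x) := by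
  obtain ⟨a, p⟩ := z
  induction p using Relation.ReflTransGen.head_induction_on with
  | refl => exact .refl
  | head h p ih => exact .head (show belowRel r x ⟨_, .head h p⟩ ⟨_, p⟩ from h) ih

theorem IsWFRel.belowRel (h : IsWFRel r) (x : A) : IsWFRel (belowRel r x) :=
  isWFRel_iff_wellFounded.2 (InvImage.wf Subtype.val (isWFRel_iff_wellFounded.1 h))

theorem IsExtRel.belowRel (h : IsExtRel r) (x : A) : IsExtRel (belowRel r x) := by
  rintro ⟨u, pu⟩ ⟨v, pv⟩ huv
  refine Subtype.ext (h u v fun z => ⟨fun hz => ?_, fun hz => ?_⟩)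
  · exact (huv ⟨z, .head hz pu⟩).1 hz
  · exact (huv ⟨z, .head hz pv⟩).2 hz

def WEApg.below {A : Type u} (r : A → A → Prop) (hwf : IsWFRel r) (hext : IsExtRel r) (x : A) :
    WEApg.{u} :=
  ⟨Below r x, belowRel r x, belowRoot r x, reflTransGen_belowRel_belowRoot,
    hwf.belowRel x, hext.belowRel x⟩

theorem piso_below_of_embedding {g : A → B} (hg : ∀ u v, r u v ↔ rB (g u) (g v))
    (hdown : ∀ u y, rB y (g u) → ∃ v, g v = y) (hinj : Function.Injective g) (x : A) :
    PIso (belowRel r x) (belowRel rB (g x)) (belowRoot r x) (belowRoot rB (g x)) := by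
  have lift_path : ∀ {y b}, Relation.ReflTransGen rB y (g b) →
      ∃ a, g a = y ∧ Relation.ReflTransGen r a b := by
    intro y b p
    induction p using Relation.ReflTransGen.head_induction_on with
    | refl => exact ⟨b, rfl, .refl⟩
    | head h _ ih =>
      obtain ⟨a', rfl, q⟩ := ih
      obtain ⟨a, rfl⟩ := hdown a' _ h
      exact ⟨a, rfl, .head ((hg a a').2 h) q⟩
  let f : Below r x → Below rB (g x) := fun a =>
    ⟨g a.1, a.2.lift g fun _ _ h => (hg _ _).1 h⟩
  have hf : Function.Bijective f := by
    refine ⟨fun a b h => Subtype.ext (hinj (congrArg Subtype.val h)), ?_⟩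
    rintro ⟨y, p⟩
    obtain ⟨a, rfl, q⟩ := lift_path p
    exact ⟨⟨a, q⟩, rfl⟩
  exact ⟨Equiv.ofBijective f hf, fun a b => hg a.1 b.1, rfl⟩

theorem piso_below_below {y : A} (c : Below r y) :
    PIso (belowRel (belowRel r y) c) (belowRel r c.1)
      (belowRoot (belowRel r y) c) (belowRoot r c.1) :=
  piso_below_of_embedding (g := Subtype.val) (fun _ _ => Iff.rfl)
    (fun u z h => ⟨⟨z, .head h u.2⟩, rfl⟩) Subtype.val_injective c

variable {W : Type*} {rW : W → W → Prop} {w : W}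

theorem memPGAt_below_iff {x : A} :
    MemPGAt rW w (belowRel r x) (belowRoot r x) ↔ MemPGAt rW w r x := by
  constructor
  · rintro ⟨c, hc, hiso⟩
    exact ⟨c.1, hc, hiso.trans (piso_below_below c)⟩
  · rintro ⟨c, hc, hiso⟩
    exact ⟨⟨c, .single hc⟩, hc, hiso.trans (piso_below_below (y := x) ⟨c, .single hc⟩).symm⟩

theorem memPGAt_iff_of_embedding {g : A → B} (hg : ∀ u v, r u v ↔ rB (g u) (g v))
    (hdown : ∀ u y, rB y (g u) → ∃ v, g v = y) (hinj : Function.Injective g)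
    {S : Set A} {b : B} (hb : ∀ y, rB y b ↔ y ∈ g '' S) :
    MemPGAt rW w rB b ↔ ∃ z ∈ S, PIso rW (belowRel r z) w (belowRoot r z) := by
  constructor
  · rintro ⟨c, hc, hiso⟩
    obtain ⟨z, hz, rfl⟩ := (hb c).1 hc
    exact ⟨z, hz, hiso.trans (piso_below_of_embedding hg hdown hinj z).symm⟩
  · rintro ⟨z, hz, hiso⟩
    exact ⟨g z, (hb _).2 ⟨z, hz, rfl⟩, hiso.trans (piso_below_of_embedding hg hdown hinj z)⟩

end Below

section AdjoinRoot

variable {A : Type*} (r : A → A → Prop) (S : Set A)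

def adjoinRootRel : Option A → Option A → Prop
  | some a, some b => r a b
  | some a, none => a ∈ S
  | none, _ => False

variable {r S}

theorem adjoinRootRel_wellFounded (h : WellFounded r) : WellFounded (adjoinRootRel r S) := by
  have acc_some : ∀ a, Acc (adjoinRootRel r S) (some a) := fun a => by
    induction a using h.induction with
    | _ a ih =>
      refine ⟨_, fun o ho => ?_⟩
      cases o with
      | none => exact ho.elim
      | some b => exact ih b ho
  refine ⟨fun o => ⟨_, fun o' ho' => ?_⟩⟩
  cases o' with
  | none => cases o <;> exact ho'.elim
  | some b => exact acc_some b

theorem adjoinRootRel_isExtRel (h : IsExtRel r) (hS : ¬∃ a, ∀ z, r z a ↔ z ∈ S) :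
    IsExtRel (adjoinRootRel r S) := by
  have not_root : ∀ v, ¬∀ o, adjoinRootRel r S o (some v) ↔ adjoinRootRel r S o none :=
    fun v hv => hS ⟨v, fun z => hv (some z)⟩
  rintro (_ | u) (_ | v) huv
  · rfl
  · exact (not_root v fun o => (huv o).symm).elim
  · exact (not_root u huv).elim
  · exact congrArg some (h u v fun z => huv (some z))

end AdjoinRoot

theorem exists_weapg_mem_iff {A : Type u} (r : A → A → Prop) (hwf : IsWFRel r)
    (hext : IsExtRel r) (S : Set A) :
    ∃ U : WEApg.{u}, ∀ W : WEApg.{u},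
      W.Mem U ↔ ∃ z ∈ S, PIso W.rel (belowRel r z) W.root (belowRoot r z) := by
  by_cases hS : ∃ a, ∀ z, r z a ↔ z ∈ S
  · obtain ⟨a, ha⟩ := hS
    refine ⟨WEApg.below r hwf hext a, fun W => memPGAt_below_iff.trans ?_⟩
    exact memPGAt_iff_of_embedding (g := id) (fun _ _ => Iff.rfl) (fun _ y _ => ⟨y, rfl⟩)
      Function.injective_id (by simpa using ha)
  · have hwf' := isWFRel_iff_wellFounded.2
      (adjoinRootRel_wellFounded (S := S) (isWFRel_iff_wellFounded.1 hwf))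
    refine ⟨WEApg.below _ hwf' (adjoinRootRel_isExtRel hext hS) none,
      fun W => memPGAt_below_iff.trans ?_⟩
    refine memPGAt_iff_of_embedding (g := some) (fun _ _ => Iff.rfl) ?_
      (Option.some_injective _) ?_
    · rintro u (_ | v) h
      exacts [h.elim, ⟨v, rfl⟩]
    · rintro (_ | y) <;> simp [adjoinRootRel]

/-- Union for well-founded extensional apgs: there is an apg `U` whose members are
exactly the members of the members `X/y` of `X`. -/
theorem weapg_union (X : WEApg.{u}) :
    ∃ U : WEApg.{u}, ∀ W : WEApg.{u},
      W.Mem U ↔ ∃ y : X.carrier, X.rel y X.root ∧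
        MemPGAt W.rel W.root (belowRel X.rel y) (belowRoot X.rel y) := by
  obtain ⟨U, hU⟩ := exists_weapg_mem_iff X.rel X.wf X.ext {z | ∃ y, X.rel z y ∧ X.rel y X.root}
  refine ⟨U, fun W => (hU W).trans ?_⟩
  simp only [memPGAt_below_iff]
  constructor
  · rintro ⟨z, ⟨y, hzy, hy⟩, hiso⟩
    exact ⟨y, hy, z, hzy, hiso⟩
  · rintro ⟨y, hy, z, hzy, hiso⟩
    exact ⟨z, ⟨y, hzy, hy⟩, hiso⟩
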